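/- Let X and Y be finite simple graphs, each with at least one vertex. Then the independence number of the derived graph of the Cartesian product X □ Y satisfies α((X □ Y)') ≤ α(X' □ Y) + α(X □ Y'), where X' and Y' are the derived graphs of X and Y. -/

import Mathlib

/-!
A vertex `(x, y)` of `X □ Y` has maximal degree iff `x` and `y` do, so `(X □ Y)'` is covered by
the images of the natural homomorphisms from `X' □ Y` and from `X □ Y'`. The preimage of an
independent set under a graph homomorphism is independent, so a maximum independent set of
`(X □ Y)'` splits into two parts, bounded by `α(X' □ Y)` and by `α(X □ Y')`.
-/

open Finset

/-- The independence number: the largest size of a set of pairwise non-adjacent vertices. -/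
noncomputable def indepNum {V : Type*} (G : SimpleGraph V) : ℕ :=
  sSup {n | ∃ s : Finset V, (∀ v ∈ s, ∀ w ∈ s, ¬ G.Adj v w) ∧ s.card = n}

/-- The degree of a vertex: the number of its neighbours. -/
noncomputable def deg {V : Type*} (G : SimpleGraph V) (v : V) : ℕ :=
  (G.neighborSet v).ncard

/-- The minimal degree. -/
noncomputable def minDeg {V : Type*} (G : SimpleGraph V) : ℕ :=
  sInf (Set.range (deg G))

/-- The maximal degree. -/
noncomputable def maxDeg {V : Type*} (G : SimpleGraph V) : ℕ :=
  sSup (Set.range (deg G))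

/-- The largest eigenvalue of the Laplacian matrix `L = D - A`. -/
noncomputable def lapMax {V : Type*} [Fintype V] (G : SimpleGraph V) : ℝ :=
  letI := Classical.decEq V
  letI := Classical.decRel G.Adj
  ⨆ i, (SimpleGraph.posSemidef_lapMatrix ℝ G).1.eigenvalues i

/-- The derived graph: the induced subgraph on the vertices of non-maximal degree. -/
noncomputable def derived {V : Type*} (G : SimpleGraph V) :
    SimpleGraph {v : V | deg G v < maxDeg G} :=
  G.induce {v : V | deg G v < maxDeg G}

namespace SimpleGraph

variable {V W₁ W₂ : Type*} {G : SimpleGraph V} {H₁ : SimpleGraph W₁} {H₂ : SimpleGraph W₂}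
  {s : Set V}

theorem IsIndepSet.preimage (hs : G.IsIndepSet s) (f : H₁ →g G) : H₁.IsIndepSet (f ⁻¹' s) :=
  fun _ ha _ hb _ hadj => hs ha hb (G.ne_of_adj (f.map_adj hadj)) (f.map_adj hadj)

theorem IsIndepSet.ncard_le_indepNum [Finite V] (hs : G.IsIndepSet s) :
    s.ncard ≤ G.indepNum := by
  rw [Set.ncard_eq_toFinset_card s]
  exact IsIndepSet.card_le_indepNum (by rwa [Set.Finite.coe_toFinset])

theorem IsIndepSet.ncard_inter_range_le_indepNum [Finite W₁] (hs : G.IsIndepSet s)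
    (f : H₁ →g G) : (s ∩ Set.range f).ncard ≤ H₁.indepNum := by
  rw [← Set.image_preimage_eq_inter_range]
  exact (Set.ncard_image_le (Set.toFinite _)).trans (hs.preimage f).ncard_le_indepNum

theorem indepNum_le_add_of_range_union_eq_univ [Finite W₁] [Finite W₂] (f₁ : H₁ →g G)
    (f₂ : H₂ →g G) (hcover : Set.range f₁ ∪ Set.range f₂ = Set.univ) :
    G.indepNum ≤ H₁.indepNum + H₂.indepNum := by
  obtain ⟨s, hs⟩ := G.exists_isNIndepSet_indepNum
  calc G.indepNum = (s ∩ (Set.range f₁ ∪ Set.range f₂) : Set V).ncard := by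
        rw [hcover, Set.inter_univ, Set.ncard_coe_finset, hs.card_eq]
    _ ≤ (s ∩ Set.range f₁ : Set V).ncard + (s ∩ Set.range f₂ : Set V).ncard := by
        rw [Set.inter_union_distrib_left]
        exact Set.ncard_union_le _ _
    _ ≤ H₁.indepNum + H₂.indepNum :=
        add_le_add (hs.isIndepSet.ncard_inter_range_le_indepNum f₁)
          (hs.isIndepSet.ncard_inter_range_le_indepNum f₂)

end SimpleGraph

theorem indepNum_eq_indepNum {V : Type*} (G : SimpleGraph V) : indepNum G = G.indepNum := by
  unfold indepNum SimpleGraph.indepNum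
  congr 1
  ext n
  refine exists_congr fun s => ⟨fun ⟨hs, hcard⟩ => ⟨fun v hv w hw _ => hs v hv w hw, hcard⟩,
    fun ⟨hs, hcard⟩ => ⟨fun v hv w hw hadj => hs hv hw hadj.ne hadj, hcard⟩⟩

section Degree

variable {V W : Type*} [Fintype V] [Fintype W]

theorem deg_eq_degree (G : SimpleGraph V) [DecidableRel G.Adj] (v : V) :
    deg G v = G.degree v := by
  rw [deg, SimpleGraph.degree, SimpleGraph.neighborFinset, Set.ncard_eq_toFinset_card']

theorem deg_le_maxDeg (G : SimpleGraph V) (v : V) : deg G v ≤ maxDeg G :=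
  le_csSup (Set.finite_range _).bddAbove ⟨v, rfl⟩

theorem exists_deg_eq_maxDeg [Nonempty V] (G : SimpleGraph V) : ∃ v, deg G v = maxDeg G :=
  Nat.sSup_mem (Set.range_nonempty _) (Set.finite_range _).bddAbove

variable (X : SimpleGraph V) (Y : SimpleGraph W)

theorem deg_boxProd (p : V × W) : deg (X.boxProd Y) p = deg X p.1 + deg Y p.2 := by
  classical
  rw [deg_eq_degree, deg_eq_degree, deg_eq_degree, SimpleGraph.degree_boxProd]

theorem maxDeg_boxProd [Nonempty V] [Nonempty W] :
    maxDeg (X.boxProd Y) = maxDeg X + maxDeg Y := by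
  refine le_antisymm (csSup_le (Set.range_nonempty _) ?_) ?_
  · rintro _ ⟨p, rfl⟩
    rw [deg_boxProd]
    exact add_le_add (deg_le_maxDeg X p.1) (deg_le_maxDeg Y p.2)
  · obtain ⟨x, hx⟩ := exists_deg_eq_maxDeg X
    obtain ⟨y, hy⟩ := exists_deg_eq_maxDeg Y
    rw [← hx, ← hy, ← deg_boxProd X Y (x, y)]
    exact deg_le_maxDeg _ _

theorem deg_boxProd_lt_maxDeg_iff (p : V × W) :
    deg (X.boxProd Y) p < maxDeg (X.boxProd Y) ↔ deg X p.1 < maxDeg X ∨ deg Y p.2 < maxDeg Y := by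
  have : Nonempty V := ⟨p.1⟩
  have : Nonempty W := ⟨p.2⟩
  have := deg_le_maxDeg X p.1
  have := deg_le_maxDeg Y p.2
  rw [deg_boxProd, maxDeg_boxProd]
  omega

noncomputable def derivedBoxProdLeftHom : (derived X).boxProd Y →g derived (X.boxProd Y) where
  toFun p := ⟨(p.1.1, p.2), (deg_boxProd_lt_maxDeg_iff X Y _).2 (.inl p.1.2)⟩
  map_rel' h := by
    rcases h with ⟨hadj, heq⟩ | ⟨hadj, heq⟩
    · exact .inl ⟨hadj, heq⟩
    · exact .inr ⟨hadj, congrArg Subtype.val heq⟩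

noncomputable def derivedBoxProdRightHom : X.boxProd (derived Y) →g derived (X.boxProd Y) where
  toFun p := ⟨(p.1, p.2.1), (deg_boxProd_lt_maxDeg_iff X Y _).2 (.inr p.2.2)⟩
  map_rel' h := by
    rcases h with ⟨hadj, heq⟩ | ⟨hadj, heq⟩
    · exact .inl ⟨hadj, congrArg Subtype.val heq⟩
    · exact .inr ⟨hadj, heq⟩

end Degree

theorem indepNum_derived_boxProd_le_general {V W : Type*} [Fintype V] [Fintype W]
    (X : SimpleGraph V) (Y : SimpleGraph W) :
    indepNum (derived (X.boxProd Y))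
      ≤ indepNum ((derived X).boxProd Y) + indepNum (X.boxProd (derived Y)) := by
  simp only [indepNum_eq_indepNum]
  refine SimpleGraph.indepNum_le_add_of_range_union_eq_univ (derivedBoxProdLeftHom X Y)
    (derivedBoxProdRightHom X Y) (Set.eq_univ_of_forall fun p => ?_)
  rcases (deg_boxProd_lt_maxDeg_iff X Y p.1).1 p.2 with hX | hY
  · exact .inl ⟨(⟨_, hX⟩, _), rfl⟩
  · exact .inr ⟨(_, ⟨_, hY⟩), rfl⟩

/-- The independence number of the derived graph of a Cartesian product obeys the
Leibniz-like rule `α((X □ Y)') ≤ α(X' □ Y) + α(X □ Y')`. -/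
theorem indepNum_derived_boxProd_le {V W : Type*} [Fintype V] [Fintype W]
    [Nonempty V] [Nonempty W] (X : SimpleGraph V) (Y : SimpleGraph W) :
    indepNum (derived (X.boxProd Y))
      ≤ indepNum ((derived X).boxProd Y) + indepNum (X.boxProd (derived Y)) :=
  indepNum_derived_boxProd_le_general X Y
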